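/- arXiv:1701.03411 — 5 statements merged into one kernel-verified Lean document; each statement's English description precedes it below -/
import Mathlib

section
/- For every prime power q, the identity 1/(1 - q·x) = ∏_{d ≥ 1} (1 - x^d)^{-A(d)(q)} holds in the formal power series ring, where A(d)(q) = (1/d) ∑_{e | d} μ(d/e) q^e is the number of monic irreducible polynomials of degree d over F_q. -/
open PowerSeries

/-- The `(x)`-adic limit of the partial products `∏_{n ≤ N} f n`: this is the infinite product `∏_{n ≥ 0} f n` whenever the factor `f n` is `≡ 1 mod x^n`. -/
noncomputable def prodPS (f : ℕ → PowerSeries ℚ) : PowerSeries ℚ :=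
  PowerSeries.mk fun N => PowerSeries.coeff N (∏ n ∈ Finset.range (N + 1), f n)

/-!
The Euler operator `θ = X d/dX` turns products into sums: `θ F = H F` with
`H = ∑_{d} d A(d) X^d / (1 - X^d) = ∑_{m} (∑_{d ∣ m} d A(d)) X^m` for the product of the
`(1 - X^d)^{-A(d)}`, and by Möbius inversion the inner sum is `q^m`, which is also the `m`-th
coefficient of the `H` belonging to `1/(1 - qX)`. Comparing coefficients in `θ F = H F` gives
`n F_n = ∑_{k ≥ 1} H_k F_{n-k}`, so `F` is determined up to degree `N` by `F(0)` and `H` up to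
degree `N`; hence the partial product over `d ≤ N` and `1/(1 - qX)` agree up to degree `N`.
-/

theorem ArithmeticFunction.sum_divisors_eq_of_eq_sum_moebius_mul {R : Type*} [CommRing R]
    {f g : ℕ → R}
    (hf : ∀ d, 1 ≤ d → f d = ∑ e ∈ d.divisors, (ArithmeticFunction.moebius (d / e) : R) * g e)
    {m : ℕ} (hm : 0 < m) : ∑ d ∈ m.divisors, f d = g m := by
  refine ArithmeticFunction.sum_eq_iff_sum_mul_moebius_eq.2 (fun n hn ↦ ?_) m hm
  rw [Nat.sum_divisorsAntidiagonal' (f := fun a b ↦ (ArithmeticFunction.moebius a : R) * g b)]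
  exact (hf n hn).symm

namespace PowerSeries

section CommRing

variable {R : Type*} [CommRing R]

theorem X_mul_derivative_prod {ι : Type*} (s : Finset ι) (f H : ι → R⟦X⟧)
    (h : ∀ i ∈ s, X * d⁄dX R (f i) = H i * f i) :
    X * d⁄dX R (∏ i ∈ s, f i) = (∑ i ∈ s, H i) * ∏ i ∈ s, f i := by
  induction s using Finset.cons_induction with
  | empty => simp
  | cons a s ha ih =>
    rw [Finset.prod_cons, Finset.sum_cons, Derivation.leibniz, smul_eq_mul, smul_eq_mul]
    linear_combination f a * (ih fun i hi ↦ h i (Finset.mem_cons_of_mem hi)) +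
      (∏ i ∈ s, f i) * h a (Finset.mem_cons_self a s)

theorem X_mul_derivative_pow {f H : R⟦X⟧} (h : X * d⁄dX R f = H * f) (n : ℕ) :
    X * d⁄dX R (f ^ n) = (n • H) * f ^ n := by
  rcases n with _ | n
  · simp
  · rw [Derivation.leibniz_pow, smul_eq_mul, nsmul_eq_mul, nsmul_eq_mul, Nat.add_sub_cancel]
    linear_combination (↑(n + 1) * f ^ n) * h

theorem coeff_eq_of_X_mul_derivative_eq [IsDomain R] [CharZero R] {F G H K : R⟦X⟧} {N : ℕ}
    (hF : X * d⁄dX R F = H * F) (hG : X * d⁄dX R G = K * G)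
    (h0 : constantCoeff F = constantCoeff G) (hH : constantCoeff H = 0)
    (hHK : ∀ m ≤ N, coeff m H = coeff m K) {n : ℕ} (hn : n ≤ N) : coeff n F = coeff n G := by
  induction n using Nat.strong_induction_on with
  | _ n ih =>
  rcases n with _ | n
  · simpa using h0
  have recursion (P Q : R⟦X⟧) (h : X * d⁄dX R P = Q * P) :
      (n + 1 : R) * coeff (n + 1) P = coeff (n + 1) (Q * P) := by
    rw [← h, coeff_succ_X_mul, coeff_derivative]
    ring
  have hK : coeff 0 K = 0 := by rw [← hHK 0 (Nat.zero_le _)]; simpa using hH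
  refine mul_left_cancel₀ (Nat.cast_add_one_ne_zero n) ?_
  rw [recursion F H hF, recursion G K hG, coeff_mul, coeff_mul]
  refine Finset.sum_congr rfl fun ⟨i, j⟩ hij ↦ ?_
  rw [Finset.HasAntidiagonal.mem_antidiagonal] at hij
  rcases i.eq_zero_or_pos with rfl | hi
  · simp [hH, hK]
  · rw [hHK i (by omega), ih j (by omega) (by omega)]

end CommRing

section Field

variable {R : Type*} [Field R]

theorem X_mul_derivative_inv_one_sub_C_mul_X_pow (c : R) (d : ℕ) :
    X * d⁄dX R (1 - C c * X ^ d)⁻¹ =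
      (d • ((1 - C c * X ^ d)⁻¹ - 1)) * (1 - C c * X ^ d)⁻¹ := by
  rcases d with _ | d
  · simp
  · have hu : (1 - C c * X ^ (d + 1)) * (1 - C c * X ^ (d + 1))⁻¹ = 1 :=
      PowerSeries.mul_inv_cancel _ (by simp)
    rw [derivative_inv', map_sub, Derivation.map_one_eq_zero, Derivation.leibniz, derivative_C,
      Derivation.leibniz_pow, derivative_X]
    simp only [smul_eq_mul, nsmul_eq_mul, Nat.add_sub_cancel]
    linear_combination -(↑(d + 1) * (1 - C c * X ^ (d + 1))⁻¹) * hu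

theorem inv_one_sub_C_mul_X_pow (c : R) {d : ℕ} (hd : 0 < d) :
    (1 - C c * X ^ d)⁻¹ = mk fun n ↦ if d ∣ n then c ^ (n / d) else 0 := by
  refine (PowerSeries.inv_eq_iff_mul_eq_one (by simp [hd.ne'])).2 ?_
  ext n
  rw [mul_sub, mul_one, map_sub, mul_left_comm, coeff_C_mul, coeff_mul_X_pow', coeff_mk, coeff_one]
  obtain hn | ⟨m, rfl⟩ := lt_or_ge n d |>.imp id Nat.exists_eq_add_of_le'
  · rcases n.eq_zero_or_pos with rfl | hn0
    · simp [hd.ne']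
    · simp [hn.not_ge, hn0.ne', Nat.not_dvd_of_pos_of_lt hn0 hn]
  · rw [Nat.add_div_right _ hd, pow_succ']
    simp [hd.ne']

theorem coeff_inv_one_sub_C_mul_X_pow_sub_one (c : R) {d : ℕ} (hd : 0 < d) (m : ℕ) :
    coeff m ((1 - C c * X ^ d)⁻¹ - 1) = if d ∣ m ∧ m ≠ 0 then c ^ (m / d) else 0 := by
  rcases m.eq_zero_or_pos with rfl | hm
  · simp [hd.ne']
  · simp [inv_one_sub_C_mul_X_pow c hd, hm.ne']

theorem X_mul_derivative_inv_one_sub_X_pow_pow (d n : ℕ) :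
    X * d⁄dX R (((1 - X ^ d)⁻¹) ^ n) =
      (((d : R) * n) • ((1 - X ^ d)⁻¹ - 1)) * ((1 - X ^ d)⁻¹) ^ n := by
  have h := X_mul_derivative_pow (X_mul_derivative_inv_one_sub_C_mul_X_pow (1 : R) d) n
  rw [map_one, one_mul] at h
  rw [h, mul_comm (d : R), mul_smul, Nat.cast_smul_eq_nsmul, Nat.cast_smul_eq_nsmul]

theorem coeff_sum_smul_inv_one_sub_X_pow_sub_one (a : ℕ → R) (ha : a 0 = 0) {m N : ℕ}
    (hmN : m ≤ N) :
    coeff m (∑ d ∈ Finset.range (N + 1), a d • ((1 - X ^ d : R⟦X⟧)⁻¹ - 1)) =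
      ∑ d ∈ m.divisors, a d := by
  have hsub : m.divisors ⊆ Finset.range (N + 1) := fun d hd ↦
    Finset.mem_range.2 (Nat.lt_succ_of_le ((Nat.divisor_le hd).trans hmN))
  have hcoeff (d : ℕ) :
      coeff m (a d • ((1 - X ^ d : R⟦X⟧)⁻¹ - 1)) = if d ∈ m.divisors then a d else 0 := by
    rcases d.eq_zero_or_pos with rfl | hd
    · simp [ha]
    · simpa [Nat.mem_divisors, and_comm] using
        congr_arg (a d * ·) (coeff_inv_one_sub_C_mul_X_pow_sub_one (1 : R) hd m)
  rw [map_sum, Finset.sum_congr rfl fun d _ ↦ hcoeff d, Finset.sum_ite_mem,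
    Finset.inter_eq_right.2 hsub]

end Field

end PowerSeries

theorem stmt_4_general (q : ℕ) (A : ℕ → ℕ)
    (hA : ∀ d : ℕ, 1 ≤ d → (d : ℚ) * A d =
      ∑ e ∈ d.divisors, (ArithmeticFunction.moebius (d / e) : ℚ) * (q : ℚ) ^ e) :
    ((1 : PowerSeries ℚ) - PowerSeries.C (q : ℚ) * PowerSeries.X)⁻¹ =
      prodPS (fun d => if d = 0 then 1 else
        (((1 : PowerSeries ℚ) - PowerSeries.X ^ d)⁻¹) ^ A d) := by
  set g : ℕ → ℚ⟦X⟧ := fun d ↦ if d = 0 then 1 else ((1 - X ^ d)⁻¹) ^ A d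
  have hg (d : ℕ) : X * d⁄dX ℚ (g d) = (((d : ℚ) * A d) • ((1 - X ^ d)⁻¹ - 1)) * g d := by
    rcases d.eq_zero_or_pos with rfl | hd
    · simp [g]
    · simpa [g, hd.ne'] using X_mul_derivative_inv_one_sub_X_pow_pow (R := ℚ) d (A d)
  have hg0 (d : ℕ) : constantCoeff (g d) = 1 := by
    rcases d.eq_zero_or_pos with rfl | hd
    · rfl
    · simp [g, hd.ne']
  have hG := X_mul_derivative_inv_one_sub_C_mul_X_pow (q : ℚ) 1
  rw [pow_one] at hG
  ext N
  rw [prodPS, coeff_mk]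
  refine coeff_eq_of_X_mul_derivative_eq hG (X_mul_derivative_prod _ g _ fun d _ ↦ hg d)
    (by simp [map_prod, hg0]) (by simp) (fun m hm ↦ ?_) le_rfl
  rw [coeff_sum_smul_inv_one_sub_X_pow_sub_one _ (by simp) hm, one_smul]
  rcases m.eq_zero_or_pos with rfl | hm0
  · simp
  · simpa [hm0.ne', ArithmeticFunction.sum_divisors_eq_of_eq_sum_moebius_mul hA hm0] using
      coeff_inv_one_sub_C_mul_X_pow_sub_one (q : ℚ) one_pos m

/-- For a prime power q, `1/(1 - q x) = ∏_{d ≥ 1} (1 - x^d)^{-A(d)(q)}` where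
`A(d)(q) = (1/d) ∑_{e ∣ d} μ(d/e) q^e` is the number of monic irreducible
polynomials of degree d over F_q. -/
theorem stmt_4 (q : ℕ) (hq : IsPrimePow q) (A : ℕ → ℕ)
    (hA : ∀ d : ℕ, 1 ≤ d → (d : ℚ) * A d =
      ∑ e ∈ d.divisors, (ArithmeticFunction.moebius (d / e) : ℚ) * (q : ℚ) ^ e) :
    ((1 : PowerSeries ℚ) - PowerSeries.C (q : ℚ) * PowerSeries.X)⁻¹ =
      prodPS (fun d => if d = 0 then 1 else
        (((1 : PowerSeries ℚ) - PowerSeries.X ^ d)⁻¹) ^ A d) :=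
  stmt_4_general q A hA
end

section
/- Define formal power series F_r(x) over ℚ by F_1(x) = 1 - x and F_{r+1}(x) = F_r(qx)/F_r(x) for r ≥ 1, where q is a fixed rational number. Then F_r(x) = exp(-∑_{n ≥ 1} (q^n - 1)^{r-1} x^n / n) for all r ≥ 1. -/
/-!
Write `L a = ∑ a n xⁿ / n`. Substituting `q x` for `x` multiplies `a n` by `qⁿ`, and `exp` turns
sums into products, so `exp (L a) (q x) / exp (L a) (x) = exp (L ((qⁿ - 1) a n))`; induction on `r`
then starts from `1 - x = exp (-∑ xⁿ / n)`. Both the exponential law and this base case follow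
from uniqueness of the solution of `φ' = a φ` with a given constant term.
-/

open PowerSeries

/-- The formal exponential `exp f = ∑ₖ f^k / k!` of a power series `f` (with zero constant term). -/
noncomputable def expPS (f : PowerSeries ℚ) : PowerSeries ℚ :=
  PowerSeries.mk fun n =>
    ∑ k ∈ Finset.range (n + 1), (PowerSeries.coeff n (f ^ k)) / (Nat.factorial k)

/-- The series `∑_{n ≥ 1} a n * x^n / n`. -/
noncomputable def serA (a : ℕ → ℚ) : PowerSeries ℚ :=
  PowerSeries.mk fun n => if n = 0 then 0 else a n / n

open Finset

namespace PowerSeries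

theorem eq_of_derivative_eq_mul_self {R : Type*} [CommRing R] [IsDomain R] [CharZero R]
    {a f g : R⟦X⟧} (hf : d⁄dX R f = a * f) (hg : d⁄dX R g = a * g)
    (h0 : constantCoeff f = constantCoeff g) : f = g := by
  ext n
  induction n using Nat.strong_induction_on with
  | _ n ih =>
    cases n with
    | zero => simpa using h0
    | succ n =>
      have hcoeff (φ : R⟦X⟧) (hφ : d⁄dX R φ = a * φ) :
          coeff (n + 1) φ * (n + 1) = ∑ p ∈ antidiagonal n, coeff p.1 a * coeff p.2 φ := by
        rw [← coeff_derivative, hφ, coeff_mul]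
      have hsum : ∑ p ∈ antidiagonal n, coeff p.1 a * coeff p.2 f =
          ∑ p ∈ antidiagonal n, coeff p.1 a * coeff p.2 g :=
        sum_congr rfl fun p hp => by rw [ih p.2 (by have := mem_antidiagonal.mp hp; omega)]
      exact mul_right_cancel₀ (Nat.cast_add_one_ne_zero n)
        ((hcoeff f hf).trans (hsum.trans (hcoeff g hg).symm))

end PowerSeries

theorem coeff_expPS (f : ℚ⟦X⟧) (n : ℕ) :
    coeff n (expPS f) = ∑ k ∈ range (n + 1), coeff n (f ^ k) / k.factorial :=
  coeff_mk _ _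

theorem coeff_expPS_of_le {f : ℚ⟦X⟧} (hf : constantCoeff f = 0) {n N : ℕ} (h : n ≤ N) :
    coeff n (expPS f) = ∑ k ∈ range (N + 1), coeff n (f ^ k) / k.factorial := by
  rw [coeff_expPS]
  refine sum_subset (range_subset_range.mpr (by omega)) fun k _ hk => ?_
  have hnk : (n : ℕ∞) < (f ^ k).order :=
    (Nat.cast_lt.mpr (by simpa using hk)).trans_le (le_order_pow_of_constantCoeff_eq_zero k hf)
  rw [coeff_of_lt_order n hnk, zero_div]

@[simp]
theorem constantCoeff_expPS (f : ℚ⟦X⟧) : constantCoeff (expPS f) = 1 := by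
  rw [← coeff_zero_eq_constantCoeff_apply]
  simp [coeff_expPS]

theorem coeff_succ_expPS_mul (f : ℚ⟦X⟧) (n : ℕ) :
    coeff (n + 1) (expPS f) * (n + 1) =
      ∑ k ∈ range (n + 1), coeff n (f ^ k * d⁄dX ℚ f) / k.factorial := by
  rw [coeff_expPS, sum_mul, sum_range_succ']
  simp only [pow_zero, coeff_one, Nat.add_one_ne_zero, if_false, zero_div, zero_mul, add_zero]
  refine sum_congr rfl fun k _ => ?_
  have hpow : coeff (n + 1) (f ^ (k + 1)) * (n + 1) = (k + 1) * coeff n (f ^ k * d⁄dX ℚ f) := by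
    rw [← coeff_derivative, derivative_pow, Nat.add_sub_cancel, mul_assoc,
      ← map_natCast (C (R := ℚ)), coeff_C_mul]
    push_cast; ring
  rw [div_mul_eq_mul_div, hpow, Nat.factorial_succ]
  push_cast
  field_simp

theorem derivative_expPS {f : ℚ⟦X⟧} (hf : constantCoeff f = 0) :
    d⁄dX ℚ (expPS f) = expPS f * d⁄dX ℚ f := by
  ext n
  rw [coeff_derivative, coeff_succ_expPS_mul, coeff_mul]
  simp_rw [coeff_mul, sum_div]
  rw [sum_comm]
  refine sum_congr rfl fun p hp => ?_
  rw [coeff_expPS_of_le hf (HasAntidiagonal.antidiagonal.fst_le hp), sum_mul]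
  exact sum_congr rfl fun k _ => by ring

theorem expPS_add {f g : ℚ⟦X⟧} (hf : constantCoeff f = 0) (hg : constantCoeff g = 0) :
    expPS (f + g) = expPS f * expPS g := by
  refine eq_of_derivative_eq_mul_self (a := d⁄dX ℚ (f + g)) ?_ ?_ (by simp)
  · rw [derivative_expPS (by simp [hf, hg]), mul_comm]
  · rw [Derivation.leibniz, smul_eq_mul, smul_eq_mul, derivative_expPS hf, derivative_expPS hg,
      map_add]
    ring

theorem expPS_zero : expPS 0 = 1 := by
  ext n
  rw [coeff_expPS, sum_eq_single 0 (fun k _ hk => by simp [zero_pow hk]) (by simp)]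
  simp

theorem expPS_neg {f : ℚ⟦X⟧} (hf : constantCoeff f = 0) : expPS (-f) = (expPS f)⁻¹ := by
  rw [eq_comm, PowerSeries.inv_eq_iff_mul_eq_one (by simp), ← expPS_add (by simp [hf]) hf,
    neg_add_cancel, expPS_zero]

theorem rescale_expPS (c : ℚ) (f : ℚ⟦X⟧) : rescale c (expPS f) = expPS (rescale c f) := by
  ext n
  simp only [coeff_rescale, coeff_expPS, mul_sum, ← map_pow]
  exact sum_congr rfl fun k _ => by ring

@[simp]
theorem constantCoeff_serA (a : ℕ → ℚ) : constantCoeff (serA a) = 0 := by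
  simp [serA]

theorem rescale_serA (c : ℚ) (a : ℕ → ℚ) :
    rescale c (serA a) = serA fun n => c ^ n * a n := by
  ext n
  simp only [coeff_rescale, serA, coeff_mk]
  split_ifs <;> ring

theorem serA_neg (a : ℕ → ℚ) : -serA a = serA fun n => -a n := by
  ext n
  simp only [map_neg, serA, coeff_mk]
  split_ifs <;> ring

theorem serA_add (a b : ℕ → ℚ) : serA a + serA b = serA fun n => a n + b n := by
  ext n
  simp only [map_add, serA, coeff_mk]
  split_ifs <;> ring

theorem rescale_expPS_serA_mul_inv (c : ℚ) (a : ℕ → ℚ) :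
    rescale c (expPS (serA a)) * (expPS (serA a))⁻¹ =
      expPS (serA fun n => (c ^ n - 1) * a n) := by
  rw [rescale_expPS, rescale_serA, ← expPS_neg (constantCoeff_serA a), serA_neg,
    ← expPS_add (by simp) (by simp), serA_add]
  congr 2 with n
  ring

theorem one_sub_X_eq_expPS : (1 - X : ℚ⟦X⟧) = expPS (serA fun _ => -1) := by
  have hderiv : d⁄dX ℚ (serA fun _ => -1) = -PowerSeries.mk 1 := by
    ext n
    simp only [coeff_derivative, serA, coeff_mk, map_neg, Nat.add_one_ne_zero, if_false,
      Pi.one_apply]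
    push_cast
    field_simp
  refine eq_of_derivative_eq_mul_self (a := d⁄dX ℚ (serA fun _ => -1)) ?_ ?_ (by simp)
  · rw [hderiv, neg_mul, mk_one_mul_one_sub_eq_one]
    simp
  · rw [derivative_expPS (by simp), mul_comm]

/-- If `F 1 = 1 - x` and `F (r+1) = F r (q x) / F r (x)` then
`F r = exp (-∑_{n ≥ 1} (q^n - 1)^(r-1) x^n / n)` for all `r ≥ 1`. -/
theorem stmt_9 (q : ℚ) (F : ℕ → PowerSeries ℚ)
    (hF1 : F 1 = 1 - PowerSeries.X)
    (hrec : ∀ r : ℕ, 1 ≤ r → F (r + 1) = PowerSeries.rescale q (F r) * (F r)⁻¹) :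
    ∀ r : ℕ, 1 ≤ r → F r = expPS (serA fun n => -((q ^ n - 1) ^ (r - 1))) := by
  intro r hr
  induction r, hr using Nat.le_induction with
  | base => simp [hF1, one_sub_X_eq_expPS]
  | succ r hr ih =>
    rw [hrec r hr, ih, rescale_expPS_serA_mul_inv]
    congr 2 with n
    rw [Nat.add_sub_cancel, ← pow_sub_one_mul (by omega : r ≠ 0)]
    ring
end

section
/- Define F_r(x) ∈ ℤ[q][[x]] by F_1(x) = 1 - x and F_{r+1}(x) = F_r(qx)/F_r(x). Then for every r ≥ 1, every coefficient of F_r(x) - 1 is divisible by (q-1)^{r-1} in the polynomial ring ℤ[q]. -/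
/-!
Write `C d ∣ f` for "every coefficient of `f` is divisible by `d`". The recurrence reads
`(F (r+1) - 1) * F r = F r (qx) - F r (x)`, and the `n`-th coefficient of the right-hand side is
`(qⁿ - 1)` times that of `F r - 1`, hence divisible by `(q - 1)` times whatever divides `F r - 1`.
Since `F r` has constant coefficient `1`, it is a unit of `ℤ[q]⟦x⟧` and can be cancelled.
-/

namespace PowerSeries

variable {R : Type*} [CommRing R]

theorem C_dvd_iff {d : R} {f : R⟦X⟧} : C d ∣ f ↔ ∀ n, d ∣ coeff n f := by
  constructor
  · rintro ⟨g, rfl⟩ n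
    exact ⟨coeff n g, coeff_C_mul ..⟩
  · intro h
    choose g hg using h
    exact ⟨mk g, ext fun n => by rw [coeff_C_mul, coeff_mk, ← hg]⟩

theorem coeff_rescale_sub_self (a : R) (f : R⟦X⟧) (n : ℕ) :
    coeff n (rescale a f - f) = (a ^ n - 1) * coeff n f := by
  rw [map_sub, coeff_rescale]
  ring

theorem C_sub_one_mul_dvd_rescale_sub_self {a d : R} {f : R⟦X⟧} (hd : C d ∣ f - 1) :
    C ((a - 1) * d) ∣ rescale a f - f := by
  have hsub : rescale a f - f = rescale a (f - 1) - (f - 1) := by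
    rw [map_sub, map_one]
    ring
  rw [hsub, C_dvd_iff]
  intro n
  rw [coeff_rescale_sub_self]
  exact mul_dvd_mul (sub_one_dvd_pow_sub_one a n) (C_dvd_iff.1 hd n)

theorem constantCoeff_rescale (a : R) (f : R⟦X⟧) :
    constantCoeff (rescale a f) = constantCoeff f := by
  rw [← coeff_zero_eq_constantCoeff_apply, coeff_rescale, pow_zero, one_mul,
    coeff_zero_eq_constantCoeff_apply]

section MulEqRescale

variable {a d : R} {f g : R⟦X⟧}

theorem constantCoeff_eq_one_of_mul_eq_rescale (h : g * f = rescale a f)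
    (hf : constantCoeff f = 1) : constantCoeff g = 1 := by
  simpa [hf, constantCoeff_rescale] using congrArg constantCoeff h

theorem C_sub_one_mul_dvd_sub_one_of_mul_eq_rescale (h : g * f = rescale a f)
    (hf : IsUnit (constantCoeff f)) (hd : C d ∣ f - 1) : C ((a - 1) * d) ∣ g - 1 := by
  have hfactor : (g - 1) * f = rescale a f - f := by rw [sub_mul, one_mul, h]
  rw [← (isUnit_iff_constantCoeff.2 hf).dvd_mul_right, hfactor]
  exact C_sub_one_mul_dvd_rescale_sub_self hd

end MulEqRescale

end PowerSeries

/-- Define `F r ∈ ℤ[q][[x]]` by `F 1 = 1 - x` and `F (r+1) = F r (qx)/F r (x)`.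
Then every coefficient of `F r - 1` is divisible by `(q-1)^(r-1)` in `ℤ[q]`. -/
theorem stmt_11 (F : ℕ → PowerSeries (Polynomial ℤ))
    (hF1 : F 1 = 1 - PowerSeries.X)
    (hrec : ∀ r : ℕ, 1 ≤ r →
      F (r + 1) * F r = PowerSeries.rescale (Polynomial.X) (F r)) :
    ∀ r : ℕ, 1 ≤ r → ∀ n : ℕ,
      ((Polynomial.X : Polynomial ℤ) - 1) ^ (r - 1) ∣
        PowerSeries.coeff (R := Polynomial ℤ) n (F r - 1) := by
  have hF : ∀ r, 1 ≤ r →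
      PowerSeries.constantCoeff (F r) = 1 ∧
        PowerSeries.C ((Polynomial.X - 1) ^ (r - 1)) ∣ F r - 1 := by
    intro r hr
    induction r, hr using Nat.le_induction with
    | base => simp [hF1]
    | succ r hr ih =>
      obtain ⟨hconst, hdvd⟩ := ih
      refine ⟨PowerSeries.constantCoeff_eq_one_of_mul_eq_rescale (hrec r hr) hconst, ?_⟩
      rw [show r + 1 - 1 = r - 1 + 1 by omega, pow_succ']
      exact PowerSeries.C_sub_one_mul_dvd_sub_one_of_mul_eq_rescale (hrec r hr)
        (hconst ▸ isUnit_one) hdvd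
  intro r hr
  exact PowerSeries.C_dvd_iff.1 (hF r hr).2
end

section
/- Let p be a prime and P_p(x) = ∏_{n ≥ 0} (1 - x^{p^n})^{-1}. Then log P_p(x) = (1/(p-1)) ∑_{n ≥ 1} (p·n_p - 1) x^n / n as formal power series over ℚ, where n_p is the p-part of n. -/
open PowerSeries

/-- The formal logarithm `log f = ∑ₖ (-1)^(k+1) (f-1)^k / k` of a power series `f` (with constant term `1`). -/
noncomputable def logPS (f : PowerSeries ℚ) : PowerSeries ℚ :=
  PowerSeries.mk fun n =>
    ∑ k ∈ Finset.range (n + 1), (-1 : ℚ) ^ (k + 1) * (PowerSeries.coeff n ((f - 1) ^ k)) / k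

/-- The generating function `P_p(x) = ∏_{n ≥ 0} (1 - x^(p^n))⁻¹` for partitions into powers of `p`. -/
noncomputable def partitionProd (p : ℕ) : PowerSeries ℚ :=
  prodPS fun n => ((1 : PowerSeries ℚ) - PowerSeries.X ^ (p ^ n))⁻¹

/-
The formal logarithm turns products of series with constant term `1` into sums: both sides of
`log (f g) = log f + log g` have constant term `0`, and their derivatives agree because
`f · (log f)' = f'`, which is checked modulo `X^(n+1)` on the partial sums
`-∑_{k ≤ n} (1 - f)^k / k`.
Modulo `X^(N+1)` only the factors with `j ≤ N` of `P_p = ∏_j (1 - X^(p^j))⁻¹` matter, so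
`log P_p = ∑_j ∑_{k ≥ 1} X^(p^j k) / k`, and the coefficient of `X^n` is
`∑_{p^j ∣ n} p^j / n = (p^(ν+1) - 1) / ((p - 1) n)` with `ν = v_p(n)`.
-/

section CommRing

variable {R : Type*} [CommRing R]

theorem dvd_prod_sub_one {ι : Type*} {d : R} {s : Finset ι} {f : ι → R}
    (h : ∀ i ∈ s, d ∣ f i - 1) : d ∣ ∏ i ∈ s, f i - 1 := by
  rw [← Ideal.mem_span_singleton, ← Ideal.Quotient.eq, map_prod, map_one]
  exact Finset.prod_eq_one fun i hi =>
    Ideal.Quotient.eq.mpr (Ideal.mem_span_singleton.mpr (h i hi))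

namespace PowerSeries

theorem coeff_eq_of_X_pow_succ_dvd_sub {n : ℕ} {f g : R⟦X⟧} (h : X ^ (n + 1) ∣ f - g) :
    coeff n f = coeff n g :=
  sub_eq_zero.mp (by rw [← map_sub]; exact X_pow_dvd_iff.mp h n (lt_add_one n))

theorem X_pow_dvd_derivative_sub {n : ℕ} {f g : R⟦X⟧} (h : X ^ (n + 1) ∣ f - g) :
    X ^ n ∣ d⁄dX R f - d⁄dX R g := by
  rw [X_pow_dvd_iff] at h ⊢
  intro m hm
  rw [← map_sub, coeff_derivative, h (m + 1) (by omega), zero_mul]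

theorem X_pow_dvd_one_sub_pow {f : R⟦X⟧} (hf : constantCoeff f = 1) (k : ℕ) :
    X ^ k ∣ (1 - f) ^ k :=
  pow_dvd_pow_of_dvd (X_dvd_iff.mpr (by simp [hf])) k

end PowerSeries

end CommRing

noncomputable def logPartialSum (n : ℕ) (f : ℚ⟦X⟧) : ℚ⟦X⟧ :=
  -∑ k ∈ Finset.range (n + 1), (k : ℚ)⁻¹ • (1 - f) ^ k

theorem coeff_logPS (f : ℚ⟦X⟧) (n : ℕ) : coeff n (logPS f) =
    ∑ k ∈ Finset.range (n + 1), (-1 : ℚ) ^ (k + 1) * coeff n ((f - 1) ^ k) / k :=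
  coeff_mk _ _

theorem constantCoeff_logPS (f : ℚ⟦X⟧) : constantCoeff (logPS f) = 0 := by
  rw [← coeff_zero_eq_constantCoeff_apply, coeff_logPS]
  simp

theorem logPS_one : logPS 1 = 0 := by
  ext n
  rw [coeff_logPS, map_zero]
  exact Finset.sum_eq_zero fun k _ => by cases k <;> simp

theorem coeff_logPS_eq_coeff_logPartialSum (f : ℚ⟦X⟧) (n : ℕ) :
    coeff n (logPS f) = coeff n (logPartialSum n f) := by
  rw [coeff_logPS, logPartialSum, map_neg, map_sum, ← Finset.sum_neg_distrib]
  refine Finset.sum_congr rfl fun k _ => ?_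
  rw [coeff_smul, smul_eq_mul, show (1 - f) ^ k = (-1 : ℚ) ^ k • (f - 1) ^ k by
    rw [← smul_pow]; simp, coeff_smul, smul_eq_mul]
  ring

theorem X_pow_dvd_logPartialSum_sub_logPartialSum {f : ℚ⟦X⟧} (hf : constantCoeff f = 1)
    {m n : ℕ} (hmn : m ≤ n) : X ^ (m + 1) ∣ logPartialSum n f - logPartialSum m f := by
  rw [logPartialSum, logPartialSum, ← Finset.sum_range_add_sum_Ico _ (by omega : m + 1 ≤ n + 1),
    neg_add, add_sub_cancel_left, dvd_neg]
  refine Finset.dvd_sum fun k hk => dvd_smul_of_dvd _ ?_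
  exact (pow_dvd_pow X (Finset.mem_Ico.mp hk).1).trans (X_pow_dvd_one_sub_pow hf k)

theorem X_pow_dvd_logPS_sub_logPartialSum {f : ℚ⟦X⟧} (hf : constantCoeff f = 1) (n : ℕ) :
    X ^ (n + 1) ∣ logPS f - logPartialSum n f := by
  refine X_pow_dvd_iff.mpr fun m hm => ?_
  rw [map_sub, coeff_logPS_eq_coeff_logPartialSum, sub_eq_zero]
  exact (coeff_eq_of_X_pow_succ_dvd_sub
    (X_pow_dvd_logPartialSum_sub_logPartialSum hf (by omega : m ≤ n))).symm

theorem X_pow_dvd_logPS_sub {f g : ℚ⟦X⟧} {n : ℕ} (h : X ^ n ∣ f - g) :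
    X ^ n ∣ logPS f - logPS g := by
  refine X_pow_dvd_iff.mpr fun m hm => ?_
  rw [map_sub, coeff_logPS, coeff_logPS, ← Finset.sum_sub_distrib]
  refine Finset.sum_eq_zero fun k _ => ?_
  have : X ^ n ∣ (f - 1) ^ k - (g - 1) ^ k :=
    (sub_sub_sub_cancel_right f g 1 ▸ h).trans (sub_dvd_pow_sub_pow _ _ k)
  rw [← sub_div, ← mul_sub, ← map_sub, X_pow_dvd_iff.mp this m hm, mul_zero, zero_div]

theorem mul_derivative_logPartialSum (f : ℚ⟦X⟧) (n : ℕ) :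
    f * d⁄dX ℚ (logPartialSum n f) = (1 - (1 - f) ^ n) * d⁄dX ℚ f := by
  have hterm (k : ℕ) : ((k + 1 : ℕ) : ℚ)⁻¹ • d⁄dX ℚ ((1 - f) ^ (k + 1)) =
      -((1 - f) ^ k * d⁄dX ℚ f) := by
    rw [Derivation.leibniz_pow, ← Nat.cast_smul_eq_nsmul ℚ, smul_smul,
      inv_mul_cancel₀ (by positivity), one_smul, Nat.add_sub_cancel, map_sub,
      Derivation.map_one_eq_zero, zero_sub, smul_eq_mul, mul_neg]
  rw [logPartialSum, map_neg, map_sum, Finset.sum_range_succ']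
  simp only [Derivation.map_smul, hterm, Finset.sum_neg_distrib, pow_zero,
    Derivation.map_one_eq_zero, smul_zero, add_zero, neg_neg, ← Finset.sum_mul]
  rw [← mul_assoc, ← mul_neg_geom_sum, sub_sub_cancel]

theorem mul_derivative_logPS {f : ℚ⟦X⟧} (hf : constantCoeff f = 1) :
    f * d⁄dX ℚ (logPS f) = d⁄dX ℚ f := by
  ext m
  refine coeff_eq_of_X_pow_succ_dvd_sub ?_
  have hlog :=
    (X_pow_dvd_derivative_sub (X_pow_dvd_logPS_sub_logPartialSum hf (m + 1))).mul_left f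
  rw [mul_sub, mul_derivative_logPartialSum] at hlog
  have := (dvd_sub hlog ((X_pow_dvd_one_sub_pow hf (m + 1)).mul_right (d⁄dX ℚ f)))
  convert this using 1
  ring

theorem logPS_mul {f g : ℚ⟦X⟧} (hf : constantCoeff f = 1) (hg : constantCoeff g = 1) :
    logPS (f * g) = logPS f + logPS g := by
  have hfg : constantCoeff (f * g) = 1 := by rw [map_mul, hf, hg, mul_one]
  have hne : f * g ≠ 0 := fun h => by simp [h] at hfg
  refine derivative.ext (mul_left_cancel₀ hne ?_) ?_
  · rw [mul_derivative_logPS hfg, Derivation.leibniz, map_add, smul_eq_mul, smul_eq_mul]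
    linear_combination (-g) * mul_derivative_logPS hf + (-f) * mul_derivative_logPS hg
  · simp only [map_add, constantCoeff_logPS, add_zero]

theorem logPS_prod {ι : Type*} (s : Finset ι) {f : ι → ℚ⟦X⟧}
    (hf : ∀ i ∈ s, constantCoeff (f i) = 1) :
    logPS (∏ i ∈ s, f i) = ∑ i ∈ s, logPS (f i) := by
  induction s using Finset.cons_induction with
  | empty => simp [logPS_one]
  | cons a s ha ih =>
    rw [Finset.forall_mem_cons] at hf
    rw [Finset.prod_cons, Finset.sum_cons,
      logPS_mul hf.1 (by rw [map_prod]; exact Finset.prod_eq_one hf.2), ih hf.2]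

theorem logPS_inv {f : ℚ⟦X⟧} (hf : constantCoeff f = 1) : logPS f⁻¹ = -logPS f := by
  have hinv : constantCoeff f⁻¹ = 1 := by rw [constantCoeff_inv, hf, inv_one]
  rw [eq_neg_iff_add_eq_zero, add_comm, ← logPS_mul hf hinv,
    PowerSeries.mul_inv_cancel f (by simp [hf]), logPS_one]

theorem constantCoeff_one_sub_X_pow {a : ℕ} (ha : 0 < a) :
    constantCoeff (1 - X ^ a : ℚ⟦X⟧) = 1 := by
  simp [ha.ne']

theorem logPS_one_sub_X_pow {a : ℕ} (ha : 0 < a) :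
    logPS (1 - X ^ a) = -mk fun n => if a ∣ n then (a : ℚ) / n else 0 := by
  ext n
  -- at `n = 0` the junk value `a / 0 = 0` is the constant term
  have hcoeff (k : ℕ) : coeff n ((1 - X ^ a - 1) ^ k : ℚ⟦X⟧) =
      (-1) ^ k * if n = a * k then 1 else 0 := by
    rw [sub_sub_cancel_left, neg_pow, ← pow_mul, ← map_one (C (R := ℚ)), ← map_neg,
      ← map_pow, coeff_C_mul, coeff_X_pow]
  have hterm (k : ℕ) : (-1 : ℚ) ^ (k + 1) * ((-1) ^ k * if n = a * k then 1 else 0) / k =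
      -if n = a * k then (k : ℚ)⁻¹ else 0 := by
    split_ifs <;> simp [pow_succ, ← mul_pow, neg_div]
  simp only [coeff_logPS, hcoeff, hterm, Finset.sum_neg_distrib, map_neg, coeff_mk, neg_inj]
  split_ifs with hdvd
  · obtain ⟨c, rfl⟩ := hdvd
    simp_rw [mul_right_inj' ha.ne', Finset.sum_ite_eq, Finset.mem_range]
    rw [if_pos (Nat.lt_succ_of_le (Nat.le_mul_of_pos_left c ha)), Nat.cast_mul,
      div_mul_cancel_left₀ (by positivity)]
  · exact Finset.sum_eq_zero fun k _ => if_neg fun h => hdvd ⟨k, h⟩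

theorem logPS_inv_one_sub_X_pow {a : ℕ} (ha : 0 < a) :
    logPS (1 - X ^ a)⁻¹ = mk fun n => if a ∣ n then (a : ℚ) / n else 0 := by
  rw [logPS_inv (constantCoeff_one_sub_X_pow ha), logPS_one_sub_X_pow ha, neg_neg]

theorem X_pow_dvd_prodPS_sub_prod {f : ℕ → ℚ⟦X⟧} (hf : ∀ n, X ^ n ∣ f n - 1)
    (N : ℕ) : X ^ (N + 1) ∣ prodPS f - ∏ n ∈ Finset.range (N + 1), f n := by
  refine X_pow_dvd_iff.mpr fun m hm => ?_
  rw [map_sub, prodPS, coeff_mk, sub_eq_zero,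
    ← Finset.prod_range_mul_prod_Ico _ (by omega : m + 1 ≤ N + 1)]
  have htail : X ^ (m + 1) ∣ ∏ n ∈ Finset.Ico (m + 1) (N + 1), f n - 1 :=
    dvd_prod_sub_one fun n hn => (pow_dvd_pow X (Finset.mem_Ico.mp hn).1).trans (hf n)
  refine (coeff_eq_of_X_pow_succ_dvd_sub ?_).symm
  rw [← mul_sub_one]
  exact htail.mul_left _

theorem X_pow_dvd_inv_one_sub_X_pow_sub_one {a : ℕ} (ha : 0 < a) :
    X ^ a ∣ (1 - X ^ a : ℚ⟦X⟧)⁻¹ - 1 := by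
  have hunit := PowerSeries.mul_inv_cancel (1 - X ^ a : ℚ⟦X⟧)
    (by rw [constantCoeff_one_sub_X_pow ha]; exact one_ne_zero)
  exact ⟨(1 - X ^ a)⁻¹, by linear_combination hunit⟩

theorem filter_pow_dvd_range_eq {p N : ℕ} (hp : 1 < p) (hN : N ≠ 0) :
    (Finset.range (N + 1)).filter (fun n => p ^ n ∣ N) = Finset.range (padicValNat p N + 1) := by
  ext n
  rw [Finset.mem_filter, Finset.mem_range, Finset.mem_range,
    padicValNat_dvd_iff_le_of_ne_one hp.ne' hN]
  refine ⟨fun h => by omega, fun h => ⟨?_, by omega⟩⟩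
  have hle : p ^ n ≤ N := Nat.le_of_dvd (Nat.pos_of_ne_zero hN)
    ((padicValNat_dvd_iff_le_of_ne_one hp.ne' hN).mpr (by omega))
  have := Nat.lt_pow_self hp (n := n)
  omega

/-- `log P_p(x) = (1/(p-1)) ∑_{n ≥ 1} (p n_p - 1) x^n / n` where `n_p` is the
p-part of `n`. -/
theorem stmt_13 (p : ℕ) (hp : p.Prime) :
    logPS (partitionProd p) = PowerSeries.mk fun n => if n = 0 then 0 else
      (1 / ((p : ℚ) - 1)) * ((p : ℚ) * (p : ℚ) ^ (padicValNat p n) - 1) / n := by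
  have hpos (n : ℕ) : 0 < p ^ n := pow_pos hp.pos n
  ext N
  rw [coeff_mk]
  rcases eq_or_ne N 0 with rfl | hN
  · simp [constantCoeff_logPS]
  have htrunc := X_pow_dvd_logPS_sub (X_pow_dvd_prodPS_sub_prod (fun n =>
    (pow_dvd_pow X (Nat.lt_pow_self hp.one_lt).le).trans
      (X_pow_dvd_inv_one_sub_X_pow_sub_one (hpos n))) N)
  rw [partitionProd, coeff_eq_of_X_pow_succ_dvd_sub htrunc, logPS_prod _ fun n _ => by
    rw [constantCoeff_inv, constantCoeff_one_sub_X_pow (hpos n), inv_one], map_sum]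
  simp only [logPS_inv_one_sub_X_pow (hpos _), coeff_mk, Nat.cast_pow]
  rw [← Finset.sum_filter, filter_pow_dvd_range_eq hp.one_lt hN, ← Finset.sum_div,
    geom_sum_eq (by exact_mod_cast hp.one_lt.ne'), if_neg hN, pow_succ]
  field_simp
end

section
/- Define F_r^p(x) = exp(-∑_{n ≥ 1} (q^n - 1)_p^{r-1} x^n/n) over ℚ, where q is a prime power prime to p and m_p denotes the p-part of m. If the coefficients (q^n-1)_p satisfy the recursion arising from F_{r+1}^p = ∏_d F_r^p(x^d)^{A^p(d)(q)}, then when r = 2, A^p(n)(q) = (1/n) ∑_{d | n} μ(n/d) (q^d - 1)_p, where A^p(n)(q) is the number of monic irreducible polynomials of degree n and p-power order in F_q[t]. Equivalently, (q^n - 1)_p = ∑_{d | n} d · A^p(d)(q). -/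
/-!
Let `P = (q^n - 1)_p`. Since `p ∤ q`, the polynomial `X^P - 1` is separable over `𝔽_q`, so `P`
is the sum of the degrees of its monic irreducible factors. A monic irreducible `f` divides
`X^P - 1` iff the order of its root divides `P`, i.e. iff that order is a power of `p` dividing
`q^n - 1`; and the order divides `q^n - 1` iff the root is fixed by the `n`-th power of Frobenius,
i.e. iff `deg f ∣ n`. Grouping the factors by degree gives the formula.
-/

/-- The number of monic irreducible polynomials of degree `d` over the finite
field `Fq` whose order (the least `e > 0` with `f ∣ X^e - 1`) is a power of `p`. -/
noncomputable def numIrredPPowerOrder (Fq : Type) [Field Fq] [Fintype Fq]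
    (p d : ℕ) : ℕ :=
  Nat.card {f : Polynomial Fq // f.Monic ∧ Irreducible f ∧ f.natDegree = d ∧
    ∃ m : ℕ, sInf {e : ℕ | 0 < e ∧ f ∣ Polynomial.X ^ e - 1} = p ^ m}

open Finset Polynomial UniqueFactorizationMonoid

theorem sInf_pow_eq_one_eq_orderOf {M : Type*} [Monoid M] (x : M) :
    sInf {e : ℕ | 0 < e ∧ x ^ e = 1} = orderOf x := by
  by_cases hx : IsOfFinOrder x
  · exact le_antisymm (Nat.sInf_le ⟨hx.orderOf_pos, pow_orderOf_eq_one x⟩)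
      (le_csInf ⟨_, hx.orderOf_pos, pow_orderOf_eq_one x⟩ fun e he ↦
        orderOf_le_of_pow_eq_one he.1 he.2)
  · have hempty : {e : ℕ | 0 < e ∧ x ^ e = 1} = ∅ :=
      Set.eq_empty_of_forall_notMem fun e he ↦ hx (isOfFinOrder_iff_pow_eq_one.mpr ⟨e, he⟩)
    rw [orderOf_eq_zero hx, hempty, Nat.sInf_empty]

theorem IsOfFinOrder.pow_eq_self_iff_orderOf_dvd {M : Type*} [Monoid M] {x : M}
    (hx : IsOfFinOrder x) {N : ℕ} (hN : 1 ≤ N) : x ^ N = x ↔ orderOf x ∣ N - 1 := by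
  nth_rw 2 [← pow_one x]
  rw [hx.pow_eq_pow_iff_modEq, Nat.ModEq.comm, Nat.modEq_iff_dvd' hN]

namespace AdjoinRoot

variable {R : Type*} [CommRing R] (f : R[X])

theorem root_pow_eq_one_iff_dvd (e : ℕ) : root f ^ e = 1 ↔ f ∣ X ^ e - 1 := by
  rw [← mk_eq_zero, map_sub, map_pow, mk_X, map_one, sub_eq_zero]

theorem root_pow_eq_root_iff_dvd (N : ℕ) : root f ^ N = root f ↔ f ∣ X ^ N - X := by
  rw [← mk_eq_zero, map_sub, map_pow, mk_X, sub_eq_zero]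

theorem orderOf_root_eq_sInf : orderOf (root f) = sInf {e : ℕ | 0 < e ∧ f ∣ X ^ e - 1} := by
  simp_rw [← root_pow_eq_one_iff_dvd, sInf_pow_eq_one_eq_orderOf]

end AdjoinRoot

theorem Polynomial.Monic.natDegree_eq_sum_normalizedFactors {K : Type*} [Field K]
    [DecidableEq K] {g : K[X]} (hg : g.Monic) (hsq : Squarefree g) :
    g.natDegree = ∑ f ∈ (normalizedFactors g).toFinset, f.natDegree := by
  have hnodup := (squarefree_iff_nodup_normalizedFactors hg.ne_zero).mp hsq
  have hmonic : ∀ f ∈ normalizedFactors g, f.Monic := fun f hf ↦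
    ((Polynomial.mem_normalizedFactors_iff hg.ne_zero).mp hf).2.1
  rw [Finset.sum_eq_multiset_sum, Multiset.toFinset_val, hnodup.dedup,
    ← natDegree_multiset_prod_of_monic _ hmonic, prod_normalizedFactors_eq hg.ne_zero,
    hg.normalize_eq_self]

section FiniteField

variable {Fq : Type*} [Field Fq] [Fintype Fq]

theorem FiniteField.natCast_ne_zero_of_not_dvd_card {p : ℕ} (hp : p.Prime)
    (hq : ¬ p ∣ Fintype.card Fq) : (p : Fq) ≠ 0 := by
  intro hp0
  have hchar : ringChar Fq = p := (Nat.prime_dvd_prime_iff_eq (CharP.char_is_prime Fq _) hp).mp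
    ((CharP.cast_eq_zero_iff Fq _ p).mp hp0)
  exact hq (hchar ▸ (CharP.cast_eq_zero_iff Fq _ _).mp (FiniteField.cast_card_eq_zero Fq))

theorem Irreducible.natDegree_dvd_and_orderOf_root_eq_prime_pow_iff {p : ℕ} (hp : p.Prime)
    {f : Fq[X]} (hf : Irreducible f) {n : ℕ} (hn : 0 < n) :
    (f.natDegree ∣ n ∧ ∃ m, orderOf (AdjoinRoot.root f) = p ^ m) ↔
      f ∣ X ^ p ^ padicValNat p (Fintype.card Fq ^ n - 1) - 1 := by
  have hqn : 2 ≤ Fintype.card Fq ^ n :=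
    Fintype.one_lt_card.trans_le (Nat.le_self_pow hn.ne' _)
  rw [hf.natDegree_dvd_iff_dvd_X_pow_card_pow_sub_X, Nat.card_eq_fintype_card,
    ← AdjoinRoot.root_pow_eq_root_iff_dvd, ← AdjoinRoot.root_pow_eq_one_iff_dvd,
    ← orderOf_dvd_iff_pow_eq_one]
  constructor
  · rintro ⟨hfrob, m, hm⟩
    have hx : IsOfFinOrder (AdjoinRoot.root f) := orderOf_pos_iff.mp (hm ▸ pow_pos hp.pos m)
    rw [hx.pow_eq_self_iff_orderOf_dvd (by omega), hm] at hfrob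
    rw [hm]
    exact pow_dvd_pow p ((padicValNat_dvd_iff_le_of_ne_one hp.ne_one (by omega)).mp hfrob)
  · intro h
    obtain ⟨m, -, hm⟩ := (Nat.dvd_prime_pow hp).mp h
    have hx : IsOfFinOrder (AdjoinRoot.root f) := orderOf_pos_iff.mp (hm ▸ pow_pos hp.pos m)
    exact ⟨(hx.pow_eq_self_iff_orderOf_dvd (by omega)).mpr (h.trans pow_padicValNat_dvd), m, hm⟩

theorem mem_normalizedFactors_X_pow_sub_one_iff [DecidableEq Fq] {p : ℕ} (hp : p.Prime)
    {n : ℕ} (hn : 0 < n) (f : Fq[X]) :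
    f ∈ normalizedFactors (X ^ p ^ padicValNat p (Fintype.card Fq ^ n - 1) - 1 : Fq[X]) ↔
      f.Monic ∧ Irreducible f ∧ f.natDegree ∣ n ∧
        ∃ m, sInf {e : ℕ | 0 < e ∧ f ∣ X ^ e - 1} = p ^ m := by
  have hmonic : (X ^ p ^ padicValNat p (Fintype.card Fq ^ n - 1) - 1 : Fq[X]).Monic :=
    leadingCoeff_X_pow_sub_one (pow_pos hp.pos _)
  rw [Polynomial.mem_normalizedFactors_iff hmonic.ne_zero, ← AdjoinRoot.orderOf_root_eq_sInf]
  constructor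
  · rintro ⟨hf, hmonic, hdvd⟩
    exact ⟨hmonic, hf, (hf.natDegree_dvd_and_orderOf_root_eq_prime_pow_iff hp hn).mpr hdvd⟩
  · rintro ⟨hmonic, hf, hdeg⟩
    exact ⟨hf, hmonic, (hf.natDegree_dvd_and_orderOf_root_eq_prime_pow_iff hp hn).mp hdeg⟩

end FiniteField

theorem numIrredPPowerOrder_eq_card_filter {Fq : Type} [Field Fq] [Fintype Fq] {p n d : ℕ}
    {T : Finset Fq[X]} (hT : ∀ f, f ∈ T ↔ f.Monic ∧ Irreducible f ∧ f.natDegree ∣ n ∧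
      ∃ m, sInf {e : ℕ | 0 < e ∧ f ∣ X ^ e - 1} = p ^ m) (hd : d ∣ n) :
    numIrredPPowerOrder Fq p d = #{f ∈ T | f.natDegree = d} := by
  rw [numIrredPPowerOrder, ← Nat.card_eq_finsetCard]
  refine Nat.card_congr (Equiv.subtypeEquivRight fun f ↦ ?_)
  rw [Finset.mem_filter, hT]
  constructor
  · rintro ⟨hmonic, hf, rfl, hord⟩
    exact ⟨⟨hmonic, hf, hd, hord⟩, rfl⟩
  · rintro ⟨⟨hmonic, hf, -, hord⟩, rfl⟩
    exact ⟨hmonic, hf, rfl, hord⟩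

/-- `(q^n - 1)_p = ∑_{d ∣ n} d · A^p(d)(q)` where `A^p(d)(q)` is the number of
monic irreducible polynomials of degree `d` and `p`-power order in `F_q[t]`. -/
theorem stmt_18 (p : ℕ) (hp : p.Prime) (Fq : Type) [Field Fq] [Fintype Fq]
    (hq : ¬ p ∣ Fintype.card Fq) :
    ∀ n : ℕ, 1 ≤ n →
      p ^ (padicValNat p (Fintype.card Fq ^ n - 1)) =
        ∑ d ∈ n.divisors, d * numIrredPPowerOrder Fq p d := by
  intro n hn
  classical
  set P := p ^ padicValNat p (Fintype.card Fq ^ n - 1)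
  set T := (normalizedFactors (X ^ P - 1 : Fq[X])).toFinset
  have hmem (f : Fq[X]) := (Multiset.mem_toFinset.trans
    (mem_normalizedFactors_X_pow_sub_one_iff hp hn f) : f ∈ T ↔ _)
  have hmonic : (X ^ P - 1 : Fq[X]).Monic := leadingCoeff_X_pow_sub_one (pow_pos hp.pos _)
  have hsep : (X ^ P - 1 : Fq[X]).Separable := X_pow_sub_one_separable_iff.mpr <| by
    rw [Nat.cast_pow]
    exact pow_ne_zero _ (FiniteField.natCast_ne_zero_of_not_dvd_card hp hq)
  have hdeg : ∀ f ∈ T, f.natDegree ∈ n.divisors := fun f hf ↦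
    Nat.mem_divisors.mpr ⟨((hmem f).mp hf).2.2.1, by omega⟩
  calc P = (X ^ P - 1 : Fq[X]).natDegree := by rw [← C_1, natDegree_X_pow_sub_C]
    _ = ∑ f ∈ T, f.natDegree :=
      hmonic.natDegree_eq_sum_normalizedFactors hsep.squarefree
    _ = ∑ d ∈ n.divisors, ∑ f ∈ T with f.natDegree = d, f.natDegree :=
      (Finset.sum_fiberwise_of_maps_to hdeg _).symm
    _ = ∑ d ∈ n.divisors, d * numIrredPPowerOrder Fq p d := by
      refine Finset.sum_congr rfl fun d hd ↦ ?_
      rw [Finset.sum_const_nat fun f hf ↦ (Finset.mem_filter.mp hf).2,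
        numIrredPPowerOrder_eq_card_filter hmem (Nat.dvd_of_mem_divisors hd), mul_comm]
end
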